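/- Let R be a commutative ring and let a = 1 + Σ_{i≥1} a_i t^i and b = 1 + Σ_{i≥1} b_i t^i be formal power series in R[[t]] with constant term 1 such that a·b = 1. Then for every k ≥ 1, (-1)^k · a_k = Σ (-1)^{k-(n_1+⋯+n_k)} · ( (n_1+⋯+n_k)! / (n_1!⋯n_k!) ) · b_1^{n_1} ⋯ b_k^{n_k}, where the sum runs over all tuples (n_1,…,n_k) of nonnegative integers with n_1 + 2·n_2 + ⋯ + k·n_k = k. (This is the algebraic content of the critical-level identity of Proposition 4 (CritProp): for a short exact sequence 0 → 𝕍* → 𝔸 → 𝕎 → 0 with 𝔸 a trivial bundle one has c(𝕍*)·c(𝕎) = 1 and c_k(𝕍) = (-1)^k c_k(𝕍*), so the k-th Chern class of 𝕍 is the displayed polynomial in the Chern classes of its critical-level partner 𝕎.) -/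

import Mathlib

open Finset

/-!
Put `c = 1 - b`; it has no constant term, so `a = (1 - c)⁻¹ = ∑ cⁿ`. Modulo `X ^ (k + 1)` only
the powers `n ≤ k` contribute, and `c` may be replaced by its truncation `p = ∑_{1 ≤ i ≤ k} cᵢ Xⁱ`.
The multinomial theorem expands `pⁿ`, the coefficient of `X ^ k` collects the exponent tuples of
weight `k`, and `cᵢ = -bᵢ` produces the signs.
-/

namespace PowerSeries

variable {R : Type*} [CommRing R]

theorem coeff_eq_sum_coeff_pow_of_mul_one_sub_eq_one {a c p : PowerSeries R} {k : ℕ}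
    (hac : a * (1 - c) = 1) (hc : X ∣ c) (hcp : X ^ (k + 1) ∣ c - p) :
    coeff k a = ∑ n ∈ range (k + 1), coeff k (p ^ n) := by
  have hp : X ∣ p := by
    simpa using dvd_sub hc (dvd_trans (dvd_pow_self X k.succ_ne_zero) hcp)
  set S := ∑ n ∈ range (k + 1), p ^ n
  -- `S` inverts `1 - p` modulo `p ^ (k + 1)`, hence inverts `1 - c` modulo `X ^ (k + 1)`.
  have hdiff : a - S = a * (p ^ (k + 1) + (c - p) * S) := by
    have hgeom : (1 - p) * S = 1 - p ^ (k + 1) := mul_neg_geom_sum p (k + 1)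
    linear_combination S * hac - a * hgeom
  have hdvd : X ^ (k + 1) ∣ a - S :=
    hdiff ▸ dvd_mul_of_dvd_right (dvd_add (pow_dvd_pow_of_dvd hp _) (dvd_mul_of_dvd_left hcp _)) _
  have hzero := X_pow_dvd_iff.mp hdvd k k.lt_succ_self
  rwa [map_sub, sub_eq_zero, map_sum] at hzero

theorem X_pow_succ_dvd_sub_sum_monomial {c : PowerSeries R} (hc : constantCoeff c = 0) (k : ℕ) :
    X ^ (k + 1) ∣ c - ∑ i : Fin k, monomial (i + 1) (coeff (i + 1) c) := by
  refine X_pow_dvd_iff.mpr fun m hm => ?_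
  rcases m with _ | j
  · rw [map_sub, map_sum, coeff_zero_eq_constantCoeff_apply, hc]
    simp [coeff_monomial]
  · have hj : j < k := by omega
    rw [map_sub, map_sum, sum_eq_single ⟨j, hj⟩]
    · simp
    · intro i _ hi
      rw [coeff_monomial, if_neg (fun h => hi (Fin.ext (by simp at h ⊢; omega)))]
    · simp

theorem coeff_sum_monomial_pow {ι : Type*} [DecidableEq ι] (s : Finset ι) (w : ι → ℕ)
    (x : ι → R) (n m : ℕ) :
    coeff m ((∑ i ∈ s, monomial (w i) (x i)) ^ n) =
      ∑ f ∈ (piAntidiag s n).filter (fun f => ∑ i ∈ s, w i * f i = m),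
        (Nat.multinomial s f : R) * ∏ i ∈ s, x i ^ f i := by
  rw [sum_pow_eq_sum_piAntidiag, map_sum, sum_filter]
  refine sum_congr rfl fun f _ => ?_
  simp_rw [monomial_pow, prod_monomial, ← map_natCast (C (R := R)), ← smul_eq_C_mul]
  rw [coeff_smul, coeff_monomial]
  split_ifs with h₁ h₂ h₂ <;> simp_all [mul_comm]

end PowerSeries

theorem Fin.sum_le_sum_succ_mul {k : ℕ} (f : Fin k → ℕ) :
    ∑ i, f i ≤ ∑ i : Fin k, (i.val + 1) * f i :=
  sum_le_sum fun i _ => Nat.le_mul_of_pos_left (f i) i.val.succ_pos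

theorem sum_range_sum_filter_piAntidiag {M : Type*} [AddCommMonoid M] (k : ℕ)
    (g : (Fin k → ℕ) → M) :
    ∑ n ∈ range (k + 1), ∑ f ∈ (piAntidiag univ n).filter
        (fun f : Fin k → ℕ => ∑ i : Fin k, (i.val + 1) * f i = k), g f =
      ∑ f ∈ (Fintype.piFinset fun _ : Fin k => range (k + 1)).filter
        (fun f : Fin k → ℕ => ∑ i : Fin k, (i.val + 1) * f i = k), g f := by
  symm
  refine sum_fiberwise_of_maps_to (g := fun f => ∑ i, f i) (fun f hf => ?_) _ |>.symm.trans
    (sum_congr rfl fun n _ => sum_congr (ext fun f => ?_) fun _ _ => rfl)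
  · rw [mem_filter] at hf
    exact mem_range.mpr (Nat.lt_succ_of_le ((Fin.sum_le_sum_succ_mul f).trans hf.2.le))
  · simp only [mem_filter, Fintype.mem_piFinset, mem_range, mem_piAntidiag, mem_univ,
      implies_true, and_true]
    refine ⟨fun ⟨⟨_, hw⟩, hn⟩ => ⟨hn, hw⟩, fun ⟨hn, hw⟩ => ⟨⟨fun i => ?_, hw⟩, hn⟩⟩
    have := (single_le_sum (fun j _ => Nat.zero_le (f j)) (mem_univ i)).trans
      (Fin.sum_le_sum_succ_mul f)
    omega

theorem neg_one_pow_mul_prod_neg_pow {R ι : Type*} [CommRing R] (s : Finset ι) (x : ι → R)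
    (f : ι → ℕ) {k : ℕ} (h : ∑ i ∈ s, f i ≤ k) :
    (-1 : R) ^ k * ∏ i ∈ s, (-x i) ^ f i = (-1) ^ (k - ∑ i ∈ s, f i) * ∏ i ∈ s, x i ^ f i := by
  simp_rw [neg_pow (x _), prod_mul_distrib, prod_pow_eq_pow_sum, ← mul_assoc, ← pow_add]
  rw [show k + ∑ i ∈ s, f i = (k - ∑ i ∈ s, f i) + 2 * ∑ i ∈ s, f i by omega, pow_add, pow_mul,
    neg_one_sq, one_pow, mul_one]

open PowerSeries

theorem coeff_of_inverse_eq_multinomial_sum_general {R : Type*} [CommRing R]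
    (a b : PowerSeries R)
    (hb : PowerSeries.constantCoeff b = 1)
    (hab : a * b = 1) (k : ℕ) :
    (-1 : R) ^ k * PowerSeries.coeff k a =
      ∑ f ∈ (Fintype.piFinset fun _ : Fin k => Finset.range (k + 1)).filter
          (fun f : Fin k → ℕ => ∑ i : Fin k, (i.val + 1) * f i = k),
        (-1 : R) ^ (k - ∑ i : Fin k, f i) * (Nat.multinomial Finset.univ f : R) *
          ∏ i : Fin k, (PowerSeries.coeff (i.val + 1) b) ^ (f i) := by
  have hc : constantCoeff (1 - b) = 0 := by simp [hb]
  have hneg (i : Fin k) : coeff (i + 1) (1 - b) = -coeff (i + 1) b := by simp [coeff_one]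
  rw [coeff_eq_sum_coeff_pow_of_mul_one_sub_eq_one (by rwa [sub_sub_cancel]) (X_dvd_iff.mpr hc)
    (X_pow_succ_dvd_sub_sum_monomial hc k)]
  simp_rw [coeff_sum_monomial_pow]
  rw [sum_range_sum_filter_piAntidiag, mul_sum]
  refine sum_congr rfl fun f hf => ?_
  have hle := (Fin.sum_le_sum_succ_mul f).trans (mem_filter.mp hf).2.le
  simp_rw [hneg]
  rw [mul_left_comm, neg_one_pow_mul_prod_neg_pow _ _ _ hle]
  ring

/-- If `a` and `b` are formal power series with constant term `1` and `a·b = 1`, then for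
every `k ≥ 1` one has
`(-1)^k a_k = Σ (-1)^{k-(n_1+⋯+n_k)} ((n_1+⋯+n_k)!/(n_1!⋯n_k!)) b_1^{n_1} ⋯ b_k^{n_k}`,
summed over tuples `(n_1,…,n_k)` of nonnegative integers with `n_1 + 2n_2 + ⋯ + k·n_k = k`.
This is the algebraic content of the critical-level identity (Proposition CritProp). -/
theorem coeff_of_inverse_eq_multinomial_sum {R : Type*} [CommRing R]
    (a b : PowerSeries R)
    (ha : PowerSeries.constantCoeff a = 1) (hb : PowerSeries.constantCoeff b = 1)
    (hab : a * b = 1) (k : ℕ) (hk : 1 ≤ k) :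
    (-1 : R) ^ k * PowerSeries.coeff k a =
      ∑ f ∈ (Fintype.piFinset fun _ : Fin k => Finset.range (k + 1)).filter
          (fun f : Fin k → ℕ => ∑ i : Fin k, (i.val + 1) * f i = k),
        (-1 : R) ^ (k - ∑ i : Fin k, f i) * (Nat.multinomial Finset.univ f : R) *
          ∏ i : Fin k, (PowerSeries.coeff (i.val + 1) b) ^ (f i) :=
  coeff_of_inverse_eq_multinomial_sum_general a b hb hab k
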